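/- arXiv:1304.5636 — 3 statements merged into one kernel-verified Lean document; each statement's English description precedes it below -/
import Mathlib

section
/- Let ρ̄' ∈ C⁰ have compact support in ℝ and suppose ∫_ℝ ρ̄'(x) dx > 0. Then the supremum over nonzero ψ ∈ H¹(ℝ) of (∫_ℝ g ρ̄' |ψ|² dx) / (∫_ℝ |ψ'|² dx) is +∞ (i.e., for every C > 0 there exists ψ ∈ H¹(ℝ), ψ ≢ 0, with ∫ g ρ̄' ψ² dx > C ∫ |ψ'|² dx). -/
/-!
Take a test function `ψ` equal to `1` on `[-R, R] ⊇ supp ρ̄'` which falls linearly to `0` on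
ramps of length `L` on either side. Then `∫ g ρ̄' ψ² = g ∫ ρ̄'` does not depend on `L`, while
`∫ |ψ'|² = 2 / L`, so the Rayleigh quotient `(g ∫ ρ̄') L / 2` is unbounded as `L → ∞`.
-/

open MeasureTheory

/-- `ψ ∈ H¹(ℝ)` with weak derivative `ψ'`: both are square-integrable and `ψ` is the
absolutely continuous function obtained by integrating `ψ'`. -/
def IsH1 (ψ ψ' : ℝ → ℝ) : Prop :=
  MemLp ψ 2 volume ∧ MemLp ψ' 2 volume ∧
    ∀ x : ℝ, ψ x = ψ 0 + ∫ t in (0:ℝ)..x, ψ' t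

open Set

lemma integral_indicator_Iic_const (c k x y : ℝ) :
    ∫ t in x..y, (Iic c).indicator (fun _ => k) t = k * (min y c - min x c) := by
  wlog hxy : x ≤ y generalizing x y
  · rw [intervalIntegral.integral_symm, this y x (le_of_not_ge hxy)]
    ring
  rw [intervalIntegral.integral_of_le hxy, setIntegral_indicator measurableSet_Iic,
    Ioc_inter_Iic, setIntegral_const, Real.volume_real_Ioc, smul_eq_mul, mul_comm]
  congr 1
  rcases le_total x c with hxc | hcx
  · rw [min_eq_left hxc, max_eq_left (sub_nonneg.2 (le_min hxy hxc))]
  · rw [min_eq_right hcx, min_eq_right (hcx.trans hxy), sub_self, max_eq_right (by linarith)]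

lemma integral_indicator_Ioc_const {a b : ℝ} (hab : a ≤ b) (k x y : ℝ) :
    ∫ t in x..y, (Ioc a b).indicator (fun _ => k) t
      = k * ((min y b - min y a) - (min x b - min x a)) := by
  have hint : ∀ c, IntervalIntegrable ((Iic c).indicator fun _ => k) volume x y := fun c =>
    ⟨(integrableOn_const measure_Ioc_lt_top.ne).indicator measurableSet_Iic,
      (integrableOn_const measure_Ioc_lt_top.ne).indicator measurableSet_Iic⟩
  rw [← Iic_sdiff_Iic, indicator_sdiff (Iic_subset_Iic.2 hab)]
  simp only [Pi.sub_apply]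
  rw [intervalIntegral.integral_sub (hint b) (hint a), integral_indicator_Iic_const,
    integral_indicator_Iic_const]
  ring

lemma integrable_indicator_Ioc_const (a b k : ℝ) :
    Integrable ((Ioc a b).indicator fun _ => k) volume :=
  (integrable_indicator_iff measurableSet_Ioc).2 (integrableOn_const measure_Ioc_lt_top.ne)

/-- The piecewise linear function equal to `1` on `[a, b]`, to `0` outside `[a - L, b + L]`,
and linear on the two ramps in between. Each ramp is written as `min x d - min x c`, the length
of `(c, d] ∩ (-∞, x]`, so that `trapezoidSlope` is visibly its derivative. -/
noncomputable def trapezoid (a b L x : ℝ) : ℝ :=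
  ((min x a - min x (a - L)) - (min x (b + L) - min x b)) / L

noncomputable def trapezoidSlope (a b L : ℝ) : ℝ → ℝ :=
  (Ioc (a - L) a).indicator (fun _ => L⁻¹) - (Ioc b (b + L)).indicator (fun _ => L⁻¹)

section Trapezoid

variable {a b L : ℝ}

lemma integral_trapezoidSlope (hL : 0 ≤ L) (x y : ℝ) :
    ∫ t in x..y, trapezoidSlope a b L t = trapezoid a b L y - trapezoid a b L x := by
  simp only [trapezoidSlope, Pi.sub_apply]
  rw [intervalIntegral.integral_sub (integrable_indicator_Ioc_const _ _ _).intervalIntegrable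
      (integrable_indicator_Ioc_const _ _ _).intervalIntegrable,
    integral_indicator_Ioc_const (by linarith), integral_indicator_Ioc_const (by linarith),
    trapezoid, trapezoid]
  ring

lemma trapezoid_eq_one (hL : 0 < L) {x : ℝ} (hx : x ∈ Icc a b) : trapezoid a b L x = 1 := by
  rw [trapezoid, min_eq_right hx.1, min_eq_right (by linarith [hx.1]),
    min_eq_left (by linarith [hx.2]), min_eq_left hx.2]
  field_simp
  ring

lemma trapezoid_eq_zero (hab : a ≤ b) (hL : 0 ≤ L) {x : ℝ} (hx : x ∉ Icc (a - L) (b + L)) :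
    trapezoid a b L x = 0 := by
  rw [mem_Icc, not_and_or, not_le, not_le] at hx
  rcases hx with hx | hx
  · rw [trapezoid, min_eq_left (by linarith), min_eq_left (by linarith),
      min_eq_left (by linarith), min_eq_left (by linarith)]
    ring
  · rw [trapezoid, min_eq_right (by linarith), min_eq_right (by linarith),
      min_eq_right (by linarith), min_eq_right (by linarith)]
    ring

lemma continuous_trapezoid : Continuous (trapezoid a b L) := by
  unfold trapezoid
  fun_prop

lemma hasCompactSupport_trapezoid (hab : a ≤ b) (hL : 0 ≤ L) :
    HasCompactSupport (trapezoid a b L) :=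
  HasCompactSupport.intro isCompact_Icc fun _ hx => trapezoid_eq_zero hab hL hx

lemma isH1_trapezoid (hab : a ≤ b) (hL : 0 ≤ L) :
    IsH1 (trapezoid a b L) (trapezoidSlope a b L) := by
  refine ⟨continuous_trapezoid.memLp_of_hasCompactSupport (hasCompactSupport_trapezoid hab hL),
    ?_, fun x => by rw [integral_trapezoidSlope hL]; ring⟩
  exact (memLp_indicator_const 2 measurableSet_Ioc _ (Or.inr measure_Ioc_lt_top.ne)).sub
    (memLp_indicator_const 2 measurableSet_Ioc _ (Or.inr measure_Ioc_lt_top.ne))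

lemma integral_trapezoidSlope_sq (hab : a ≤ b) (hL : 0 < L) :
    ∫ x, trapezoidSlope a b L x ^ 2 = 2 / L := by
  have hsq : ∀ x, trapezoidSlope a b L x ^ 2 =
      (Ioc (a - L) a).indicator (fun _ => L⁻¹ ^ 2) x
        + (Ioc b (b + L)).indicator (fun _ => L⁻¹ ^ 2) x := by
    intro x
    simp only [trapezoidSlope, Pi.sub_apply, indicator]
    split_ifs with h₁ h₂ h₂
    · exact absurd (h₁.2.trans hab) (not_le.2 h₂.1)
    all_goals ring
  simp_rw [hsq]
  rw [integral_add (integrable_indicator_Ioc_const _ _ _) (integrable_indicator_Ioc_const _ _ _),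
    integral_indicator_const _ measurableSet_Ioc,
    integral_indicator_const _ measurableSet_Ioc, Real.volume_real_Ioc, Real.volume_real_Ioc,
    sub_sub_cancel, add_sub_cancel_left, max_eq_left hL.le, smul_eq_mul, sq, ← mul_assoc,
    mul_inv_cancel₀ hL.ne']
  ring

end Trapezoid

lemma integral_const_mul_mul_sq_of_eq_one_on_tsupport {ρ ψ : ℝ → ℝ}
    (h : ∀ x ∈ tsupport ρ, ψ x = 1) (c : ℝ) :
    ∫ x, c * ρ x * ψ x ^ 2 = c * ∫ x, ρ x := by
  rw [← integral_const_mul]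
  congr 1 with x
  by_cases hx : x ∈ tsupport ρ
  · rw [h x hx, one_pow, mul_one]
  · rw [image_eq_zero_of_notMem_tsupport hx, mul_zero, zero_mul]

theorem statement0_general (g : ℝ) (hg : 0 < g) (ρ' : ℝ → ℝ)
    (hsupp : HasCompactSupport ρ')
    (hpos : 0 < ∫ x, ρ' x) :
    ∀ C > 0, ∃ ψ ψ' : ℝ → ℝ, IsH1 ψ ψ' ∧ ψ ≠ 0 ∧
      C * (∫ x, (ψ' x) ^ 2) < ∫ x, g * ρ' x * (ψ x) ^ 2 := by
  intro C hC
  obtain ⟨R, hR, hρR⟩ := hsupp.isCompact.isBounded.subset_closedBall_lt 0 (0 : ℝ)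
  rw [Real.closedBall_eq_Icc, zero_sub, zero_add] at hρR
  have hRR : -R ≤ R := by linarith
  have hgI : 0 < g * ∫ x, ρ' x := mul_pos hg hpos
  set L := 2 * C / (g * ∫ x, ρ' x) + 1
  have hL : 0 < L := by positivity
  refine ⟨trapezoid (-R) R L, trapezoidSlope (-R) R L, isH1_trapezoid hRR hL.le,
    fun h => ?_, ?_⟩
  · simpa [trapezoid_eq_one hL ⟨neg_nonpos.2 hR.le, hR.le⟩] using congrFun h 0
  rw [integral_trapezoidSlope_sq hRR hL,
    integral_const_mul_mul_sq_of_eq_one_on_tsupport (fun x hx => trapezoid_eq_one hL (hρR hx)),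
    mul_div_assoc', div_lt_iff₀ hL]
  have hLI : g * (∫ x, ρ' x) * L = 2 * C + g * ∫ x, ρ' x := by
    simp only [L]
    field_simp
  linarith

/-- If `ρ̄' ∈ C⁰_c(ℝ)` and `∫ ρ̄' > 0`, then
`sup_{ψ ∈ H¹(ℝ), ψ ≢ 0} (∫ g ρ̄' ψ²)/(∫ |ψ'|²) = +∞`: for every `C > 0` there is a nonzero
`ψ ∈ H¹(ℝ)` with `∫ g ρ̄' ψ² > C ∫ |ψ'|²`. -/
theorem statement0 (g : ℝ) (hg : 0 < g) (ρ' : ℝ → ℝ)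
    (hcont : Continuous ρ') (hsupp : HasCompactSupport ρ')
    (hpos : 0 < ∫ x, ρ' x) :
    ∀ C > 0, ∃ ψ ψ' : ℝ → ℝ, IsH1 ψ ψ' ∧ ψ ≠ 0 ∧
      C * (∫ x, (ψ' x) ^ 2) < ∫ x, g * ρ' x * (ψ x) ^ 2 :=
  statement0_general g hg ρ' hsupp hpos
end

section
/- Let ρ̄' ∈ C⁰ have compact support in ℝ and suppose ∫_ℝ ρ̄'(x) dx < 0. Then the supremum over nonzero ψ ∈ H¹(ℝ) of (∫_ℝ g ρ̄' |ψ|² dx)/(∫_ℝ |ψ'|² dx) is finite; equivalently, there exists C > 0 such that ∫_ℝ g ρ̄' ψ² dx ≤ C ∫_ℝ |ψ'|² dx for all ψ ∈ H¹(ℝ). -/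
/-!
Write `ψ = ψ 0 + r` with `r x = ∫₀ˣ ψ'`. On the support of `ρ'`, contained in `[-R, R]`,
Cauchy–Schwarz gives `|r| ≤ s := √(R ‖ψ'‖₂²)`, so
`∫ ρ' ψ² ≤ (ψ 0)² ∫ ρ' + (2 |ψ 0| s + s²) ∫ |ρ'|`.
Because `∫ ρ' < 0`, the part depending on `ψ 0` is a concave quadratic in `|ψ 0|`, whose
maximum `s² (∫ |ρ'|)² / |∫ ρ'|` is again a multiple of `s² = R ‖ψ'‖₂²`.
-/

open MeasureTheory

theorem sq_integral_le_measureReal_univ_mul_integral_sq {α : Type*} [MeasurableSpace α]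
    {μ : Measure α} [IsFiniteMeasure μ] {f : α → ℝ} (hf : MemLp f 2 μ) :
    (∫ x, f x ∂μ) ^ 2 ≤ μ.real Set.univ * ∫ x, f x ^ 2 ∂μ := by
  have hholder := integral_mul_le_Lp_mul_Lq_of_nonneg (μ := μ) Real.HolderConjugate.two_two
    (.of_forall fun x => abs_nonneg (f x)) (.of_forall fun _ => zero_le_one)
    (by rw [ENNReal.ofReal_ofNat]; exact hf.abs) (by simpa using memLp_const (μ := μ) (1 : ℝ))
  simp only [mul_one, integral_const, smul_eq_mul, ← Real.sqrt_eq_rpow,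
    Real.rpow_two, sq_abs, one_pow] at hholder
  calc (∫ x, f x ∂μ) ^ 2 ≤ (∫ x, |f x| ∂μ) ^ 2 := by
        rw [← sq_abs]
        exact pow_le_pow_left₀ (abs_nonneg _) abs_integral_le_integral_abs 2
    _ ≤ (√(∫ x, f x ^ 2 ∂μ) * √(μ.real Set.univ)) ^ 2 := by gcongr
    _ = μ.real Set.univ * ∫ x, f x ^ 2 ∂μ := by
        rw [mul_pow, Real.sq_sqrt (integral_nonneg fun x => sq_nonneg _),
          Real.sq_sqrt measureReal_nonneg, mul_comm]

theorem sq_intervalIntegral_le_abs_sub_mul_integral_sq {f : ℝ → ℝ} (hf : MemLp f 2 volume)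
    (a b : ℝ) : (∫ t in a..b, f t) ^ 2 ≤ |b - a| * ∫ t, f t ^ 2 := by
  have : IsFiniteMeasure (volume.restrict (Set.uIoc a b)) :=
    isFiniteMeasure_restrict.mpr measure_Ioc_lt_top.ne
  calc (∫ t in a..b, f t) ^ 2 = (∫ t in Set.uIoc a b, f t) ^ 2 := by
        rw [← sq_abs, intervalIntegral.abs_integral_eq_abs_integral_uIoc, sq_abs]
    _ ≤ volume.real (Set.uIoc a b) * ∫ t in Set.uIoc a b, f t ^ 2 := by
        simpa using sq_integral_le_measureReal_univ_mul_integral_sq (hf.restrict (Set.uIoc a b))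
    _ ≤ |b - a| * ∫ t, f t ^ 2 := by
        rw [measureReal_def, Real.volume_uIoc, ENNReal.toReal_ofReal (abs_nonneg _)]
        exact mul_le_mul_of_nonneg_left (setIntegral_le_integral hf.integrable_sq
          (.of_forall fun t => sq_nonneg _)) (abs_nonneg _)

namespace IsH1

variable {ψ ψ' : ℝ → ℝ}

theorem continuous (h : IsH1 ψ ψ') : Continuous ψ := by
  have hψ'_int : ∀ a b, IntervalIntegrable ψ' volume a b := fun a b =>
    ((h.2.1.locallyIntegrable one_le_two).integrableOn_isCompact isCompact_uIcc).intervalIntegrable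
  rw [funext h.2.2]
  exact continuous_const.add (intervalIntegral.continuous_primitive hψ'_int 0)

theorem sq_sub_apply_zero_le (h : IsH1 ψ ψ') (x : ℝ) :
    (ψ x - ψ 0) ^ 2 ≤ |x| * ∫ t, ψ' t ^ 2 := by
  simpa [h.2.2 x] using sq_intervalIntegral_le_abs_sub_mul_integral_sq h.2.1 0 x

end IsH1

theorem integral_mul_sq_le_of_abs_sub_le {ρ ψ : ℝ → ℝ} (hρ : Continuous ρ)
    (hρ_supp : HasCompactSupport ρ) (hψ : Continuous ψ) {a s : ℝ}
    (hψ_near : ∀ x, ρ x ≠ 0 → |ψ x - a| ≤ s) :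
    ∫ x, ρ x * ψ x ^ 2 ≤ a ^ 2 * (∫ x, ρ x) + (2 * |a| * s + s ^ 2) * ∫ x, |ρ x| := by
  have hρ_int : Integrable ρ := hρ.integrable_of_hasCompactSupport hρ_supp
  have hpointwise : ∀ x, ρ x * ψ x ^ 2 ≤ a ^ 2 * ρ x + (2 * |a| * s + s ^ 2) * |ρ x| := by
    intro x
    rcases eq_or_ne (ρ x) 0 with hx | hx
    · simp [hx]
    have hs := hψ_near x hx
    have hfactor : |ψ x ^ 2 - a ^ 2| ≤ 2 * |a| * s + s ^ 2 := by
      calc |ψ x ^ 2 - a ^ 2| = |ψ x - a| * |ψ x - a + 2 * a| := by rw [← abs_mul]; ring_nf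
        _ ≤ s * (s + 2 * |a|) := by
            gcongr
            · exact (abs_nonneg _).trans hs
            · exact (abs_add_le _ _).trans (by rw [abs_mul, abs_two]; linarith)
        _ = 2 * |a| * s + s ^ 2 := by ring
    calc ρ x * ψ x ^ 2 = a ^ 2 * ρ x + ρ x * (ψ x ^ 2 - a ^ 2) := by ring
      _ ≤ a ^ 2 * ρ x + |ρ x| * (2 * |a| * s + s ^ 2) := by
          refine add_le_add le_rfl ?_
          calc ρ x * (ψ x ^ 2 - a ^ 2) ≤ |ρ x| * |ψ x ^ 2 - a ^ 2| := by
                rw [← abs_mul]; exact le_abs_self _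
            _ ≤ |ρ x| * (2 * |a| * s + s ^ 2) := by gcongr
      _ = a ^ 2 * ρ x + (2 * |a| * s + s ^ 2) * |ρ x| := by ring
  calc ∫ x, ρ x * ψ x ^ 2 ≤ ∫ x, (a ^ 2 * ρ x + (2 * |a| * s + s ^ 2) * |ρ x|) :=
        integral_mono ((hρ.mul (hψ.pow 2)).integrable_of_hasCompactSupport hρ_supp.mul_right)
          ((hρ_int.const_mul _).add (hρ_int.abs.const_mul _)) hpointwise
    _ = a ^ 2 * (∫ x, ρ x) + (2 * |a| * s + s ^ 2) * ∫ x, |ρ x| := by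
        rw [integral_add (hρ_int.const_mul _) (hρ_int.abs.const_mul _), integral_const_mul,
          integral_const_mul]

theorem sq_mul_add_two_mul_le_sq_div_neg {c : ℝ} (hc : c < 0) (a b : ℝ) :
    a ^ 2 * c + 2 * a * b ≤ b ^ 2 / -c := by
  rw [le_div_iff₀ (neg_pos.mpr hc)]
  nlinarith [sq_nonneg (a * c + b)]

/-- If `ρ̄' ∈ C⁰_c(ℝ)` and `∫ ρ̄' < 0`, then the critical number is finite: there is `C > 0`
with `∫ g ρ̄' ψ² ≤ C ∫ |ψ'|²` for all `ψ ∈ H¹(ℝ)`. -/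
theorem statement1 (g : ℝ) (hg : 0 < g) (ρ' : ℝ → ℝ)
    (hcont : Continuous ρ') (hsupp : HasCompactSupport ρ')
    (hneg : (∫ x, ρ' x) < 0) :
    ∃ C > 0, ∀ ψ ψ' : ℝ → ℝ, IsH1 ψ ψ' →
      (∫ x, g * ρ' x * (ψ x) ^ 2) ≤ C * ∫ x, (ψ' x) ^ 2 := by
  obtain ⟨R, hR, hsupp_ball⟩ := hsupp.isBounded.subset_closedBall_lt 0 0
  set I := ∫ x, ρ' x
  set L := ∫ x, |ρ' x|
  have hL : 0 < L :=
    (neg_pos.mpr hneg).trans_le <| (neg_le_abs I).trans abs_integral_le_integral_abs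
  refine ⟨g * R * (L ^ 2 / -I + L), by have := neg_pos.mpr hneg; positivity, ?_⟩
  intro ψ ψ' hψ
  set D := ∫ x, ψ' x ^ 2
  set s := √(R * D)
  have hs : s ^ 2 = R * D := Real.sq_sqrt (by positivity)
  have hψ_near : ∀ x, ρ' x ≠ 0 → |ψ x - ψ 0| ≤ s := by
    intro x hx
    have hxR : |x| ≤ R := by
      simpa using hsupp_ball (subset_tsupport ρ' hx)
    exact Real.abs_le_sqrt <| (hψ.sq_sub_apply_zero_le x).trans (by gcongr)
  have hquad := sq_mul_add_two_mul_le_sq_div_neg hneg |ψ 0| (s * L)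
  calc ∫ x, g * ρ' x * ψ x ^ 2 = g * ∫ x, ρ' x * ψ x ^ 2 := by
        simp_rw [mul_assoc]; exact integral_const_mul g _
    _ ≤ g * (ψ 0 ^ 2 * I + (2 * |ψ 0| * s + s ^ 2) * L) := by
        gcongr; exact integral_mul_sq_le_of_abs_sub_le hcont hsupp hψ.continuous hψ_near
    _ ≤ g * R * (L ^ 2 / -I + L) * D := by
        rw [← sq_abs (ψ 0), mul_assoc g R, mul_assoc g, mul_right_comm R, ← hs]
        gcongr
        linear_combination hquad
end

section
/- For each fixed ξ ∈ ℝ² with ξ₁ ≠ 0 and M ≠ 0 satisfying 0 < |M ξ₁|/|ξ| < M_c, the supremum S²(ξ) := sup over ψ ∈ H¹(ℝ) with ‖ψ‖_{L²(ℝ)} = 1 of Q(ψ) := (g|ξ|²/(Mξ₁)²) ∫_ℝ ρ̄' ψ² dx − ∫_ℝ |ψ'|² dx is achieved by some ψ₀ ∈ H¹(ℝ) with ‖ψ₀‖_{L²} = 1. -/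
/-!
Take a maximizing sequence `uₙ` for `Q` on the unit sphere of `L²`. As `ρ̄'` is bounded,
`‖uₙ'‖_{L²}` stays bounded, so after passing to a subsequence `uₙ'` converges weakly in `L²`
(sequential Banach–Alaoglu) and `uₙ(0)` converges (each `uₙ` is `½`-Hölder with a uniform constant
and has `L²`-norm one); hence `uₙ(x) = uₙ(0) + ⟪uₙ', 𝟙_(0,x]⟫` converges for every `x`. Since `ρ̄'`
has compact support and the `uₙ` are locally uniformly bounded, the potential term converges by
dominated convergence, while the kinetic term is weakly lower semicontinuous; so the limit `ψ`
satisfies `Q(ψ) ≥ S² > 0`, and `‖ψ‖_{L²} ≤ 1` by Fatou. Positivity of `Q(ψ)` forces `ψ ≠ 0`, and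
as `Q` is homogeneous of degree two, `ψ / ‖ψ‖_{L²}` is a normalized maximizer.
-/

open MeasureTheory

/-- The functional `Q(ψ) = (g|ξ|²/(Mξ₁)²) ∫ ρ̄' ψ² − ∫ |ψ'|²`. -/
noncomputable def Qfun (g M ξ1 ξ2 : ℝ) (ρ' ψ ψ' : ℝ → ℝ) : ℝ :=
  g * (ξ1 ^ 2 + ξ2 ^ 2) / (M * ξ1) ^ 2 * (∫ x, ρ' x * (ψ x) ^ 2) - ∫ x, (ψ' x) ^ 2

open Filter Topology Set
open scoped RealInnerProductSpace ENNReal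

section InnerProductSpace

variable {E : Type*} [NormedAddCommGroup E] [InnerProductSpace ℝ E]

theorem exists_subseq_tendsto_inner [CompleteSpace E] [TopologicalSpace.SeparableSpace E]
    {f : ℕ → E} {R : ℝ} (hf : ∀ n, ‖f n‖ ≤ R) :
    ∃ w : E, ∃ φ : ℕ → ℕ, StrictMono φ ∧
      ∀ v, Tendsto (fun n => ⟪f (φ n), v⟫) atTop (𝓝 ⟪w, v⟫) := by
  let T : E ≃ₗᵢ⋆[ℝ] StrongDual ℝ E := InnerProductSpace.toDual ℝ E
  have hball : ∀ n, StrongDual.toWeakDual (T (f n)) ∈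
      WeakDual.toStrongDual ⁻¹' Metric.closedBall 0 R := fun n => by
    simpa using hf n
  obtain ⟨x', -, φ, hφ, hlim⟩ := WeakDual.isSeqCompact_closedBall ℝ E 0 R hball
  refine ⟨T.symm (WeakDual.toStrongDual x'), φ, hφ, fun v => ?_⟩
  simpa [T, Function.comp_def] using (WeakDual.eval_continuous v).tendsto x' |>.comp hlim

theorem norm_le_of_tendsto_inner {ι : Type*} {l : Filter ι} [l.NeBot] {f : ι → E} {w : E}
    {r : ℝ} (hw : ∀ v, Tendsto (fun n => ⟪f n, v⟫) l (𝓝 ⟪w, v⟫))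
    (hr : Tendsto (fun n => ‖f n‖) l (𝓝 r)) : ‖w‖ ≤ r := by
  have hr0 : 0 ≤ r := ge_of_tendsto' hr fun n => norm_nonneg _
  have hww : ‖w‖ ^ 2 ≤ r * ‖w‖ := by
    rw [← real_inner_self_eq_norm_sq]
    exact le_of_tendsto_of_tendsto' (hw w) (hr.mul_const _) fun n => real_inner_le_norm _ _
  nlinarith [norm_nonneg w]

end InnerProductSpace

section L2

variable {α : Type*} [MeasurableSpace α] {μ : Measure α}

theorem MeasureTheory.MemLp.inner_toLp_toLp {f g : α → ℝ} (hf : MemLp f 2 μ) (hg : MemLp g 2 μ) :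
    ⟪hf.toLp f, hg.toLp g⟫ = ∫ x, f x * g x ∂μ := by
  rw [L2.inner_def]
  refine integral_congr_ae ?_
  filter_upwards [hf.coeFn_toLp, hg.coeFn_toLp] with x hfx hgx
  rw [hfx, hgx, real_inner_eq_re_inner, RCLike.inner_apply, conj_trivial, mul_comm]
  rfl

theorem MeasureTheory.MemLp.norm_toLp_sq {f : α → ℝ} (hf : MemLp f 2 μ) :
    ‖hf.toLp f‖ ^ 2 = ∫ x, f x ^ 2 ∂μ := by
  rw [← real_inner_self_eq_norm_sq, hf.inner_toLp_toLp hf]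
  simp only [sq]

theorem MeasureTheory.MemLp.norm_toLp {f : α → ℝ} (hf : MemLp f 2 μ) :
    ‖hf.toLp f‖ = √(∫ x, f x ^ 2 ∂μ) := by
  rw [← hf.norm_toLp_sq, Real.sqrt_sq (norm_nonneg _)]

theorem memLp_two_and_integral_sq_le_of_tendsto {f : ℕ → α → ℝ} {g : α → ℝ}
    (hf : ∀ n, MemLp (f n) 2 μ) (hg : AEStronglyMeasurable g μ)
    (hlim : ∀ᵐ x ∂μ, Tendsto (fun n => f n x) atTop (𝓝 (g x))) {C : ℝ}
    (hC : ∀ n, ∫ x, f n x ^ 2 ∂μ ≤ C) :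
    MemLp g 2 μ ∧ ∫ x, g x ^ 2 ∂μ ≤ C := by
  have hsq : ∀ n, ∫⁻ x, ENNReal.ofReal (f n x ^ 2) ∂μ ≤ ENNReal.ofReal C := fun n => by
    rw [← ofReal_integral_eq_lintegral_ofReal (hf n).integrable_sq
      (ae_of_all _ fun x => sq_nonneg _)]
    exact ENNReal.ofReal_le_ofReal (hC n)
  have hlint : ∫⁻ x, ENNReal.ofReal (g x ^ 2) ∂μ ≤ ENNReal.ofReal C :=
    calc ∫⁻ x, ENNReal.ofReal (g x ^ 2) ∂μ
        = ∫⁻ x, liminf (fun n => ENNReal.ofReal (f n x ^ 2)) atTop ∂μ :=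
          lintegral_congr_ae <| hlim.mono fun x hx =>
            ((ENNReal.continuous_ofReal.tendsto _).comp (hx.pow 2)).liminf_eq.symm
      _ ≤ liminf (fun n => ∫⁻ x, ENNReal.ofReal (f n x ^ 2) ∂μ) atTop :=
          lintegral_liminf_le' fun n => ((hf n).1.pow 2).aemeasurable.ennreal_ofReal
      _ ≤ ENNReal.ofReal C := liminf_le_of_le (by isBoundedDefault) fun b hb =>
          (hb.exists.choose_spec).trans (hsq _)
  have hint : Integrable (fun x => g x ^ 2) μ :=
    ⟨hg.pow 2, (hasFiniteIntegral_iff_ofReal (ae_of_all _ fun x => sq_nonneg _)).2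
      (hlint.trans_lt ENNReal.ofReal_lt_top)⟩
  refine ⟨(memLp_two_iff_integrable_sq hg).2 hint, ?_⟩
  have hC0 : 0 ≤ C := (integral_nonneg fun x => sq_nonneg (f 0 x)).trans (hC 0)
  rwa [← ENNReal.ofReal_le_ofReal_iff hC0, ofReal_integral_eq_lintegral_ofReal hint
    (ae_of_all _ fun x => sq_nonneg _)]

end L2

section Interval

theorem MeasureTheory.MemLp.intervalIntegrable {f : ℝ → ℝ} (hf : MemLp f 2 volume) (a b : ℝ) :
    IntervalIntegrable f volume a b :=
  ((hf.locallyIntegrable one_le_two).integrableOn_isCompact isCompact_uIcc).intervalIntegrable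

theorem MeasureTheory.MemLp.intervalIntegral_toLp {f : ℝ → ℝ} (hf : MemLp f 2 volume) (a b : ℝ) :
    ∫ t in a..b, hf.toLp f t = ∫ t in a..b, f t :=
  intervalIntegral.integral_congr_ae (hf.coeFn_toLp.mono fun _ hx _ => hx)

theorem intervalIntegral_eq_inner_indicatorConstLp (f : Lp ℝ 2 (volume : Measure ℝ)) {a b : ℝ}
    (hab : a ≤ b) :
    ∫ t in a..b, f t =
      ⟪f, indicatorConstLp 2 measurableSet_Ioc (by simp : volume (Ioc a b) ≠ ∞) (1 : ℝ)⟫ := by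
  rw [intervalIntegral.integral_of_le hab, real_inner_comm, L2.inner_indicatorConstLp_one]

theorem exists_forall_intervalIntegral_eq_inner (a b : ℝ) :
    ∃ v : Lp ℝ 2 (volume : Measure ℝ), ∀ f, ∫ t in a..b, f t = ⟪f, v⟫ := by
  rcases le_total a b with hab | hba
  · exact ⟨_, fun f => intervalIntegral_eq_inner_indicatorConstLp f hab⟩
  · refine ⟨-indicatorConstLp 2 measurableSet_Ioc (by simp : volume (Ioc b a) ≠ ∞) (1 : ℝ),
      fun f => ?_⟩
    rw [intervalIntegral.integral_symm, intervalIntegral_eq_inner_indicatorConstLp f hba,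
      inner_neg_right]

theorem abs_intervalIntegral_le_sqrt_mul_norm (f : Lp ℝ 2 (volume : Measure ℝ)) {a b : ℝ}
    (hab : a ≤ b) : |∫ t in a..b, f t| ≤ √(b - a) * ‖f‖ := by
  rw [intervalIntegral_eq_inner_indicatorConstLp f hab, mul_comm]
  refine (abs_real_inner_le_norm _ _).trans_eq ?_
  rw [norm_indicatorConstLp two_ne_zero ENNReal.ofNat_ne_top, Real.sqrt_eq_rpow]
  simp [hab]

end Interval

namespace IsH1

variable {ψ ψ' : ℝ → ℝ}

theorem sub_eq_intervalIntegral (h : IsH1 ψ ψ') (a b : ℝ) :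
    ψ b - ψ a = ∫ t in a..b, ψ' t := by
  rw [h.2.2 a, h.2.2 b, ← intervalIntegral.integral_interval_sub_left
    (h.2.1.intervalIntegrable 0 b) (h.2.1.intervalIntegrable 0 a)]
  ring

theorem abs_sub_le (h : IsH1 ψ ψ') (a b : ℝ) :
    |ψ b - ψ a| ≤ √|b - a| * √(∫ x, ψ' x ^ 2) := by
  wlog hab : a ≤ b generalizing a b
  · rw [abs_sub_comm, abs_sub_comm b]
    exact this b a (le_of_not_ge hab)
  rw [h.sub_eq_intervalIntegral, ← h.2.1.intervalIntegral_toLp, ← h.2.1.norm_toLp,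
    abs_of_nonneg (sub_nonneg.2 hab)]
  exact abs_intervalIntegral_le_sqrt_mul_norm _ hab

theorem exists_mem_Ioc_sq_le (h : IsH1 ψ ψ') : ∃ y ∈ Ioc (-1 : ℝ) 0, ψ y ^ 2 ≤ ∫ x, ψ x ^ 2 := by
  have hvol : volume (Ioc (-1 : ℝ) 0) = 1 := by simp
  obtain ⟨y, hy, hle⟩ := exists_le_setAverage (s := Ioc (-1 : ℝ) 0) (by simp [hvol])
    (by simp [hvol]) h.1.integrable_sq.integrableOn
  refine ⟨y, hy, hle.trans ?_⟩
  rw [setAverage_eq, measureReal_def, hvol, ENNReal.toReal_one, inv_one, one_smul]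
  exact setIntegral_le_integral h.1.integrable_sq (ae_of_all _ fun x => sq_nonneg _)

theorem abs_apply_le (h : IsH1 ψ ψ') (hN : ∫ x, ψ x ^ 2 ≤ 1) {B : ℝ} (hB : ∫ x, ψ' x ^ 2 ≤ B)
    (x : ℝ) : |ψ x| ≤ 1 + √(|x| + 1) * √B := by
  obtain ⟨y, ⟨hy₁, hy₂⟩, hy⟩ := h.exists_mem_Ioc_sq_le
  have hψy : |ψ y| ≤ 1 := (sq_le_one_iff_abs_le_one _).1 (hy.trans hN)
  have hxy : |x - y| ≤ |x| + 1 := by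
    rw [abs_le]; constructor <;> linarith [le_abs_self x, neg_abs_le x]
  calc |ψ x| ≤ |ψ y| + |ψ x - ψ y| := by linarith [abs_sub_abs_le_abs_sub (ψ x) (ψ y)]
    _ ≤ 1 + √(|x| + 1) * √B := by
      gcongr
      exact (h.abs_sub_le y x).trans (by gcongr)

theorem const_mul (h : IsH1 ψ ψ') (s : ℝ) : IsH1 (fun x => s * ψ x) (fun x => s * ψ' x) :=
  ⟨h.1.const_mul s, h.2.1.const_mul s, fun x => by
    rw [intervalIntegral.integral_const_mul, ← mul_add, ← h.2.2 x]⟩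

theorem tendsto_apply_of_tendsto_inner {u u' : ℕ → ℝ → ℝ} (hu : ∀ n, IsH1 (u n) (u' n))
    {a : ℝ} (ha : Tendsto (fun n => u n 0) atTop (𝓝 a)) {w : Lp ℝ 2 (volume : Measure ℝ)}
    (hw : ∀ v, Tendsto (fun n => ⟪(hu n).2.1.toLp (u' n), v⟫) atTop (𝓝 ⟪w, v⟫)) (x : ℝ) :
    Tendsto (fun n => u n x) atTop (𝓝 (a + ∫ t in (0:ℝ)..x, w t)) := by
  obtain ⟨v, hv⟩ := exists_forall_intervalIntegral_eq_inner 0 x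
  have hux : ∀ n, u n x = u n 0 + ⟪(hu n).2.1.toLp (u' n), v⟫ := fun n => by
    rw [← hv, (hu n).2.1.intervalIntegral_toLp]
    exact (hu n).2.2 x
  simpa only [hux, hv] using ha.add (hw v)

theorem exists_subseq_tendsto {u u' : ℕ → ℝ → ℝ} (hu : ∀ n, IsH1 (u n) (u' n))
    (hN : ∀ n, ∫ x, u n x ^ 2 ≤ 1) {B : ℝ} (hB : ∀ n, ∫ x, u' n x ^ 2 ≤ B) :
    ∃ σ : ℕ → ℕ, StrictMono σ ∧ ∃ ψ ψ' : ℝ → ℝ, IsH1 ψ ψ' ∧ ∫ x, ψ x ^ 2 ≤ 1 ∧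
      (∀ x, Tendsto (fun n => u (σ n) x) atTop (𝓝 (ψ x))) ∧
      ∀ β, Tendsto (fun n => ∫ x, u' (σ n) x ^ 2) atTop (𝓝 β) → ∫ x, ψ' x ^ 2 ≤ β := by
  have : Fact ((2 : ℝ≥0∞) ≠ ∞) := ⟨ENNReal.ofNat_ne_top⟩
  obtain ⟨w, σ₁, hσ₁, hw⟩ := exists_subseq_tendsto_inner (f := fun n => (hu n).2.1.toLp (u' n))
    fun n => (hu n).2.1.norm_toLp.trans_le (Real.sqrt_le_sqrt (hB n))
  have h0 : ∀ n, u (σ₁ n) 0 ∈ Icc (-(1 + √B)) (1 + √B) := fun n =>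
    abs_le.1 (by simpa using (hu (σ₁ n)).abs_apply_le (hN _) (hB _) 0)
  obtain ⟨a, -, σ₂, hσ₂, ha⟩ := isCompact_Icc.tendsto_subseq h0
  have hw₂ := fun v => (hw v).comp hσ₂.tendsto_atTop
  have hlim := tendsto_apply_of_tendsto_inner (fun n => hu (σ₁ (σ₂ n))) ha hw₂
  have hcont : Continuous fun x => a + ∫ t in (0:ℝ)..x, w t :=
    continuous_const.add (intervalIntegral.continuous_primitive (Lp.memLp w).intervalIntegrable 0)
  obtain ⟨hmem, hle⟩ := memLp_two_and_integral_sq_le_of_tendsto (fun n => (hu _).1)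
    hcont.aestronglyMeasurable (ae_of_all _ hlim) fun n => hN _
  refine ⟨σ₁ ∘ σ₂, hσ₁.comp hσ₂, _, w, ⟨hmem, Lp.memLp w, fun x => by simp⟩, hle, hlim,
    fun β hβ => ?_⟩
  have hβ0 : 0 ≤ β := ge_of_tendsto' hβ fun n => integral_nonneg fun x => sq_nonneg _
  have hnorm : ‖w‖ ≤ √β := norm_le_of_tendsto_inner hw₂ <| hβ.sqrt.congr fun n =>
    ((hu (σ₁ (σ₂ n))).2.1.norm_toLp).symm
  rw [← (Lp.memLp w).norm_toLp_sq, Lp.toLp_coeFn, ← Real.sq_sqrt hβ0]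
  gcongr

end IsH1

section Qfun

variable {g M ξ1 ξ2 : ℝ} {ρ' ψ ψ' : ℝ → ℝ}

theorem Qfun_const_mul (s : ℝ) :
    Qfun g M ξ1 ξ2 ρ' (fun x => s * ψ x) (fun x => s * ψ' x) = s ^ 2 * Qfun g M ξ1 ξ2 ρ' ψ ψ' := by
  have hA : ∫ x, ρ' x * (s * ψ x) ^ 2 = s ^ 2 * ∫ x, ρ' x * ψ x ^ 2 := by
    rw [← integral_const_mul]; congr 1; ext x; ring
  have hB : ∫ x, (s * ψ' x) ^ 2 = s ^ 2 * ∫ x, ψ' x ^ 2 := by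
    rw [← integral_const_mul]; congr 1; ext x; ring
  rw [Qfun, Qfun, hA, hB]
  ring

theorem abs_integral_mul_sq_le {C : ℝ} (hC : ∀ x, |ρ' x| ≤ C) (hψ : MemLp ψ 2 volume) :
    |∫ x, ρ' x * ψ x ^ 2| ≤ C * ∫ x, ψ x ^ 2 := by
  rw [← integral_const_mul, ← Real.norm_eq_abs]
  refine norm_integral_le_of_norm_le (hψ.integrable_sq.const_mul C) (ae_of_all _ fun x => ?_)
  rw [Real.norm_eq_abs, abs_mul, abs_of_nonneg (sq_nonneg (ψ x))]
  gcongr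
  exact hC x

theorem integral_sq_le_sub_Qfun {C : ℝ} (hC : ∀ x, |ρ' x| ≤ C) (hψ : MemLp ψ 2 volume)
    (hN : ∫ x, ψ x ^ 2 = 1) :
    ∫ x, ψ' x ^ 2 ≤ |g * (ξ1 ^ 2 + ξ2 ^ 2) / (M * ξ1) ^ 2| * C - Qfun g M ξ1 ξ2 ρ' ψ ψ' := by
  have hA := abs_integral_mul_sq_le hC hψ
  rw [hN, mul_one] at hA
  rw [Qfun, le_sub_iff_add_le, add_sub_cancel]
  exact (le_abs_self _).trans (by rw [abs_mul]; gcongr)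

theorem exists_seq_tendsto_sSup_Qfun {C : ℝ} (hC : ∀ x, |ρ' x| ≤ C)
    (hpos : ∃ φ φ' : ℝ → ℝ, IsH1 φ φ' ∧ ∫ x, φ x ^ 2 = 1 ∧ 0 < Qfun g M ξ1 ξ2 ρ' φ φ') :
    ∃ S, 0 < S ∧ (∀ ψ ψ', IsH1 ψ ψ' → ∫ x, ψ x ^ 2 = 1 → Qfun g M ξ1 ξ2 ρ' ψ ψ' ≤ S) ∧
      ∃ u u' : ℕ → ℝ → ℝ, (∀ n, IsH1 (u n) (u' n) ∧ ∫ x, u n x ^ 2 = 1) ∧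
        Monotone (fun n => Qfun g M ξ1 ξ2 ρ' (u n) (u' n)) ∧
        Tendsto (fun n => Qfun g M ξ1 ξ2 ρ' (u n) (u' n)) atTop (𝓝 S) := by
  set 𝒮 := {q | ∃ ψ ψ', IsH1 ψ ψ' ∧ ∫ x, ψ x ^ 2 = 1 ∧ Qfun g M ξ1 ξ2 ρ' ψ ψ' = q}
  have hbdd : BddAbove 𝒮 := ⟨|g * (ξ1 ^ 2 + ξ2 ^ 2) / (M * ξ1) ^ 2| * C, by
    rintro _ ⟨ψ, ψ', hψ, hN, rfl⟩
    exact (le_sub_comm.1 (integral_sq_le_sub_Qfun hC hψ.1 hN)).trans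
      (sub_le_self _ (integral_nonneg fun x => sq_nonneg _))⟩
  obtain ⟨φ, φ', hφ, hφN, hφQ⟩ := hpos
  have hφ𝒮 : Qfun g M ξ1 ξ2 ρ' φ φ' ∈ 𝒮 := ⟨φ, φ', hφ, hφN, rfl⟩
  obtain ⟨q, hmono, hq, hq𝒮⟩ := exists_seq_tendsto_sSup ⟨_, hφ𝒮⟩ hbdd
  choose u u' hu hN hQ using hq𝒮
  refine ⟨sSup 𝒮, hφQ.trans_le (le_csSup hbdd hφ𝒮),
    fun ψ ψ' hψ hN => le_csSup hbdd ⟨ψ, ψ', hψ, hN, rfl⟩, u, u', fun n => ⟨hu n, hN n⟩, ?_, ?_⟩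
  · simpa only [hQ] using hmono
  · simpa only [hQ] using hq

theorem exists_normalized_le_Qfun (hψ : IsH1 ψ ψ') (hN : ∫ x, ψ x ^ 2 ≤ 1)
    (hQ : 0 < Qfun g M ξ1 ξ2 ρ' ψ ψ') :
    ∃ φ φ' : ℝ → ℝ, IsH1 φ φ' ∧ ∫ x, φ x ^ 2 = 1 ∧
      Qfun g M ξ1 ξ2 ρ' ψ ψ' ≤ Qfun g M ξ1 ξ2 ρ' φ φ' := by
  set t := ∫ x, ψ x ^ 2
  have ht : 0 < t := by
    refine (integral_nonneg fun x => sq_nonneg (ψ x)).lt_of_ne fun ht => hQ.not_ge ?_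
    have hψ0 : (fun x => ψ x ^ 2) =ᵐ[volume] 0 :=
      (integral_eq_zero_iff_of_nonneg (fun x => sq_nonneg _) hψ.1.integrable_sq).1 ht.symm
    have hA : ∫ x, ρ' x * ψ x ^ 2 = 0 :=
      integral_eq_zero_of_ae (hψ0.mono fun x hx => by simp [hx])
    simp only [Qfun, hA, mul_zero, zero_sub, neg_nonpos]
    exact integral_nonneg fun x => sq_nonneg _
  set s := (√t)⁻¹
  have hs : s ^ 2 * t = 1 := by
    rw [inv_pow, Real.sq_sqrt ht.le, inv_mul_cancel₀ ht.ne']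
  refine ⟨_, _, hψ.const_mul s, ?_, ?_⟩
  · simp only [mul_pow, integral_const_mul]
    exact hs
  · rw [Qfun_const_mul]
    have hs1 : 1 ≤ s ^ 2 := by nlinarith
    nlinarith

theorem IsH1.tendsto_integral_mul_sq (hcont : Continuous ρ') (hsupp : HasCompactSupport ρ')
    {u u' : ℕ → ℝ → ℝ} (hu : ∀ n, IsH1 (u n) (u' n)) (hN : ∀ n, ∫ x, u n x ^ 2 ≤ 1) {B : ℝ}
    (hB : ∀ n, ∫ x, u' n x ^ 2 ≤ B) (hlim : ∀ x, Tendsto (fun n => u n x) atTop (𝓝 (ψ x))) :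
    Tendsto (fun n => ∫ x, ρ' x * u n x ^ 2) atTop (𝓝 (∫ x, ρ' x * ψ x ^ 2)) := by
  set bound := fun x => ‖ρ' x‖ * (1 + √(|x| + 1) * √B) ^ 2
  have hbound : Integrable bound volume :=
    ((hcont.norm.mul (by fun_prop)).integrable_of_hasCompactSupport hsupp.norm.mul_right)
  refine tendsto_integral_of_dominated_convergence bound
    (fun n => hcont.aestronglyMeasurable.mul ((hu n).1.1.pow 2)) hbound
    (fun n => ae_of_all _ fun x => ?_) (ae_of_all _ fun x => (hlim x).pow 2 |>.const_mul _)
  simp only [bound, norm_mul, norm_pow, Real.norm_eq_abs]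
  gcongr
  exact (hu n).abs_apply_le (hN n) (hB n) x

end Qfun

theorem statement3_general (g M ξ1 ξ2 : ℝ)
    (ρ' : ℝ → ℝ) (hcont : Continuous ρ') (hsupp : HasCompactSupport ρ')
    (hMc : ∃ φ φ' : ℝ → ℝ, IsH1 φ φ' ∧ (∫ x, (φ x) ^ 2) = 1 ∧
      0 < Qfun g M ξ1 ξ2 ρ' φ φ') :
    ∃ ψ₀ ψ₀' : ℝ → ℝ, IsH1 ψ₀ ψ₀' ∧ (∫ x, (ψ₀ x) ^ 2) = 1 ∧
      ∀ ψ ψ' : ℝ → ℝ, IsH1 ψ ψ' → (∫ x, (ψ x) ^ 2) = 1 →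
        Qfun g M ξ1 ξ2 ρ' ψ ψ' ≤ Qfun g M ξ1 ξ2 ρ' ψ₀ ψ₀' := by
  set c := g * (ξ1 ^ 2 + ξ2 ^ 2) / (M * ξ1) ^ 2
  have hQ_def : ∀ ψ ψ', Qfun g M ξ1 ξ2 ρ' ψ ψ' = c * (∫ x, ρ' x * ψ x ^ 2) - ∫ x, ψ' x ^ 2 :=
    fun _ _ => rfl
  obtain ⟨C, hC⟩ := hcont.bounded_above_of_compact_support hsupp
  simp only [Real.norm_eq_abs] at hC
  obtain ⟨S, hS, hle, u, u', hu, hmono, hQ⟩ := exists_seq_tendsto_sSup_Qfun hC hMc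
  have hB : ∀ n, ∫ x, u' n x ^ 2 ≤ |c| * C - Qfun g M ξ1 ξ2 ρ' (u 0) (u' 0) := fun n =>
    (integral_sq_le_sub_Qfun hC (hu n).1.1 (hu n).2).trans
      (sub_le_sub_left (hmono (Nat.zero_le n)) _)
  obtain ⟨σ, hσ, ψ, ψ', hψ, hψN, hlim, hlsc⟩ :=
    IsH1.exists_subseq_tendsto (fun n => (hu n).1) (fun n => (hu n).2.le) hB
  have hA := IsH1.tendsto_integral_mul_sq hcont hsupp (fun n => (hu (σ n)).1)
    (fun n => (hu (σ n)).2.le) (fun n => hB (σ n)) hlim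
  have hSψ : S ≤ Qfun g M ξ1 ξ2 ρ' ψ ψ' := by
    have := hlsc _ <| ((hA.const_mul c).sub (hQ.comp hσ.tendsto_atTop)).congr fun n => by
      simp only [Function.comp_apply, hQ_def]; ring
    rw [hQ_def]
    linarith
  obtain ⟨φ, φ', hφ, hφN, hφQ⟩ := exists_normalized_le_Qfun hψ hψN (hS.trans_le hSψ)
  exact ⟨φ, φ', hφ, hφN, fun χ χ' hχ hχN => (hle χ χ' hχ hχN).trans (hSψ.trans hφQ)⟩

/-- For fixed `ξ` with `ξ₁ ≠ 0`, `M ≠ 0`, and `0 < |Mξ₁|/|ξ| < M_c` (the latter expressed by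
the existence of a normalized `φ ∈ H¹(ℝ)` with `Q(φ) > 0`), the supremum
`S²(ξ) = sup {Q(ψ) : ψ ∈ H¹(ℝ), ‖ψ‖_{L²} = 1}` is achieved by some `ψ₀`. -/
theorem statement3 (g M ξ1 ξ2 : ℝ) (hg : 0 < g) (hM : M ≠ 0) (hξ1 : ξ1 ≠ 0)
    (ρ' : ℝ → ℝ) (hcont : Continuous ρ') (hsupp : HasCompactSupport ρ')
    (hMc : ∃ φ φ' : ℝ → ℝ, IsH1 φ φ' ∧ (∫ x, (φ x) ^ 2) = 1 ∧
      0 < Qfun g M ξ1 ξ2 ρ' φ φ') :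
    ∃ ψ₀ ψ₀' : ℝ → ℝ, IsH1 ψ₀ ψ₀' ∧ (∫ x, (ψ₀ x) ^ 2) = 1 ∧
      ∀ ψ ψ' : ℝ → ℝ, IsH1 ψ ψ' → (∫ x, (ψ x) ^ 2) = 1 →
        Qfun g M ξ1 ξ2 ρ' ψ ψ' ≤ Qfun g M ξ1 ξ2 ρ' ψ₀ ψ₀' :=
  statement3_general g M ξ1 ξ2 ρ' hcont hsupp hMc
end
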